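/- (Case 1.2.1 of the social-cost analysis.) Consider a facility-location instance with |N₁| ≥ |N₂|, |N₁ \ N₂| ≥ |N₁ ∩ N₂|, and |N₂ \ N₁| ≤ |N₁ ∩ N₂|. Let m₁ be the median position of N₁ \ N₂ and m₂ the median position of N₂, and suppose t(m₂) = t(m₁), so the mechanism outputs w = (t(m₁), s(m₂)). Then for every feasible solution (y₁,y₂) with y₂ = t(m₁), one has SC(w) ≤ 7 · SC(y₁,y₂). -/

import Mathlib

open Finset

/-- The smallest element of `C` minimizing the distance to `p`. -/
noncomputable def tloc (C : Finset ℝ) (p : ℝ) : ℝ :=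
  ((C.filter fun c => ∀ c' ∈ C, |p - c| ≤ |p - c'|).min).untopD 0

/-- The smallest element of `C \ {tloc C p}` minimizing the distance to `p`. -/
noncomputable def sloc (C : Finset ℝ) (p : ℝ) : ℝ :=
  tloc (C.erase (tloc C p)) p

/-- The `⌈n/2⌉`-th smallest element of a multiset of reals (0 if empty). -/
noncomputable def medOf (l : Multiset ℝ) : ℝ :=
  (l.sort (· ≤ ·)).getD ((Multiset.card l + 1) / 2 - 1) 0

/-- The median position of the agents in `S` with positions `x`. -/
noncomputable def medianPos (S : Finset ℕ) (x : ℕ → ℝ) : ℝ :=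
  medOf (S.val.map x)

/-- The Conditional-Median mechanism, assuming facility 1 is (weakly) more popular. -/
noncomputable def condMedian (x : ℕ → ℝ) (N1 N2 : Finset ℕ) (C : Finset ℝ) : ℝ × ℝ :=
  if (N1 ∩ N2).card ≤ (N1 \ N2).card then
    let m1 := medianPos (N1 \ N2) x
    let m2 := medianPos N2 x
    let w1 := tloc C m1
    (w1, if tloc C m2 ≠ w1 then tloc C m2 else sloc C m2)
  else
    let m12 := medianPos (N1 ∩ N2) x
    (tloc C m12, sloc C m12)

/-- The output of the Conditional-Median mechanism (roles swapped if `|N₂| > |N₁|`). -/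
noncomputable def mechOutput (x : ℕ → ℝ) (N1 N2 : Finset ℕ) (C : Finset ℝ) : ℝ × ℝ :=
  if N2.card ≤ N1.card then condMedian x N1 N2 C
  else (condMedian x N2 N1 C).swap

/-- The cost of agent `i` at solution `y`: the distance to the farthest approved facility. -/
noncomputable def cost (x : ℕ → ℝ) (N1 N2 : Finset ℕ) (i : ℕ) (y : ℝ × ℝ) : ℝ :=
  if i ∈ N1 then
    if i ∈ N2 then max |x i - y.1| |x i - y.2| else |x i - y.1|
  else |x i - y.2|

/-- The social cost. -/
noncomputable def SC (x : ℕ → ℝ) (N1 N2 N : Finset ℕ) (y : ℝ × ℝ) : ℝ :=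
  ∑ i ∈ N, cost x N1 N2 i y

/-- The max cost. -/
noncomputable def MC (x : ℕ → ℝ) (N1 N2 N : Finset ℕ) (hN : N.Nonempty) (y : ℝ × ℝ) : ℝ :=
  N.sup' hN fun i => cost x N1 N2 i y

/-!
Write `t = t(m₁)`, `s = s(m₂)`; the competing solution is `(y₁, t)`. Bounding each agent's cost by
the sum of its distances to both approved facilities gives
`SC(t, s) ≤ ∑_{N₁} |x - t| + ∑_{N₂} |x - s|`, while `SC(y₁, t)` dominates both `∑_{N₁} |x - y₁|`
and `∑_{N₂} |x - t|`. A median minimizes the total distance of its set, and `t` (resp. `s`, which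
may pick `y₁ ≠ t(m₂) = t`) is at least as close to `m₁` (resp. `m₂`) as `y₁` is. The triangle
inequality through the median then gives `∑_{N₁ \ N₂} |x - t| ≤ 3 ∑_{N₁ \ N₂} |x - y₁|` and, since
`N₁ ∩ N₂` is at least half of `N₂` and each of its agents pays for `|m₂ - y₁|`,
`∑_{N₂} |x - s| ≤ 3 ∑_{N₂} |x - t| + 2 ∑_{N₁ ∩ N₂} |x - y₁|`. Summing, `SC(t, s) ≤ (3 + 4) SC(y₁, t)`.
-/

section Location

variable {C : Finset ℝ} {p c : ℝ}

lemma abs_sub_tloc_le (hc : c ∈ C) : |p - tloc C p| ≤ |p - c| := by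
  obtain ⟨c₀, hc₀, hmin⟩ := C.exists_min_image (fun c => |p - c|) ⟨c, hc⟩
  have hF : (C.filter fun c => ∀ c' ∈ C, |p - c| ≤ |p - c'|).Nonempty :=
    ⟨c₀, mem_filter.2 ⟨hc₀, hmin⟩⟩
  rw [tloc, ← coe_min' hF, WithTop.untopD_coe]
  exact (mem_filter.1 (min'_mem _ hF)).2 c hc

lemma abs_sub_sloc_le (hc : c ∈ C) (hct : c ≠ tloc C p) : |p - sloc C p| ≤ |p - c| :=
  abs_sub_tloc_le (mem_erase.2 ⟨hct, hc⟩)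

end Location

lemma abs_sub_add_abs_sub_le_of_mem_uIcc {a b m : ℝ} (hm : m ∈ Set.uIcc a b) (p : ℝ) :
    |a - m| + |b - m| ≤ |a - p| + |b - p| := by
  calc |a - m| + |b - m| = |b - a| := by
        rcases Set.mem_uIcc.1 hm with ⟨ham, hmb⟩ | ⟨hbm, hma⟩
        · rw [abs_of_nonpos (by linarith), abs_of_nonneg (by linarith),
            abs_of_nonneg (by linarith)]; ring
        · rw [abs_of_nonneg (by linarith), abs_of_nonpos (by linarith),
            abs_of_nonpos (by linarith)]; ring
    _ ≤ |a - p| + |b - p| := by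
        simpa [abs_sub_comm a p, add_comm] using abs_sub_le b p a

lemma List.sum_map_abs_sub_median_le {l : List ℝ} (hl : l.Pairwise (· ≤ ·)) (p : ℝ) :
    (l.map fun a => |a - l.getD ((l.length + 1) / 2 - 1) 0|).sum ≤
      (l.map fun a => |a - p|).sum := by
  set m := l.getD ((l.length + 1) / 2 - 1) 0
  -- The median lies between the `i`-th smallest and the `i`-th largest element.
  have hpair (i : Fin l.length) :
      |l[i.1] - m| + |l[i.rev.1] - m| ≤ |l[i.1] - p| + |l[i.rev.1] - p| := by
    let k : Fin l.length := ⟨(l.length + 1) / 2 - 1, by have := i.isLt; omega⟩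
    have hmk : m = l[k] := List.getD_eq_getElem _ _ k.isLt
    refine abs_sub_add_abs_sub_le_of_mem_uIcc ?_ p
    have mono {a b : Fin l.length} (hab : a.1 ≤ b.1) : l[a.1] ≤ l[b.1] := hl.rel_get_of_le hab
    have hk : k.1 = (l.length + 1) / 2 - 1 := rfl
    have hi := i.isLt
    have hr := Fin.val_rev i
    rw [hmk, Set.mem_uIcc]
    rcases le_total i.1 i.rev.1 with hle | hle
    · exact Or.inl ⟨mono (by omega), mono (by omega)⟩
    · exact Or.inr ⟨mono (by omega), mono (by omega)⟩
  have hrev (f : ℝ → ℝ) : ∑ i : Fin l.length, f l[i.rev.1] = ∑ i : Fin l.length, f l[i.1] :=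
    Fintype.sum_equiv Fin.revPerm _ _ fun _ => rfl
  rw [← Fin.sum_univ_fun_getElem, ← Fin.sum_univ_fun_getElem]
  have := Finset.sum_le_sum fun i (_ : i ∈ univ) => hpair i
  rw [sum_add_distrib, sum_add_distrib, hrev (fun a => |a - m|), hrev (fun a => |a - p|)] at this
  linarith

lemma Multiset.sum_map_abs_sub_medOf_le (s : Multiset ℝ) (p : ℝ) :
    (s.map fun a => |a - medOf s|).sum ≤ (s.map fun a => |a - p|).sum := by
  have := List.sum_map_abs_sub_median_le (Multiset.pairwise_sort s (· ≤ ·)) p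
  rwa [← Multiset.sum_coe, ← Multiset.sum_coe, ← Multiset.map_coe, ← Multiset.map_coe,
    Multiset.sort_eq, Multiset.length_sort, ← medOf] at this

lemma sum_abs_sub_medianPos_le (S : Finset ℕ) (x : ℕ → ℝ) (p : ℝ) :
    ∑ i ∈ S, |x i - medianPos S x| ≤ ∑ i ∈ S, |x i - p| := by
  simpa only [Finset.sum, Multiset.map_map, Function.comp_def, medianPos] using
    Multiset.sum_map_abs_sub_medOf_le (S.val.map x) p

section NearMedian

variable (S : Finset ℕ) (x : ℕ → ℝ)

lemma card_mul_abs_sub_le (a b : ℝ) :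
    S.card * |a - b| ≤ ∑ i ∈ S, |x i - a| + ∑ i ∈ S, |x i - b| := by
  rw [← sum_add_distrib, ← nsmul_eq_mul, ← sum_const]
  refine sum_le_sum fun i _ => ?_
  simpa [abs_sub_comm] using abs_sub_le a (x i) b

lemma sum_abs_sub_le_add_card_mul {m q y : ℝ} (hq : |m - q| ≤ |m - y|) :
    ∑ i ∈ S, |x i - q| ≤ ∑ i ∈ S, |x i - m| + S.card * |m - y| := by
  rw [← nsmul_eq_mul, ← sum_const, ← sum_add_distrib]
  exact sum_le_sum fun i _ => (abs_sub_le (x i) m q).trans (by linarith)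

lemma sum_abs_sub_le_of_near_medianPos {T : Finset ℕ} (hTS : T ⊆ S) {k : ℕ}
    (hk : S.card ≤ k * T.card) {q y : ℝ}
    (hq : |medianPos S x - q| ≤ |medianPos S x - y|) (z : ℝ) :
    ∑ i ∈ S, |x i - q| ≤ (k + 1) * ∑ i ∈ S, |x i - z| + k * ∑ i ∈ T, |x i - y| := by
  set m := medianPos S x
  have hmed : ∑ i ∈ S, |x i - m| ≤ ∑ i ∈ S, |x i - z| := sum_abs_sub_medianPos_le S x z
  have hTm : ∑ i ∈ T, |x i - m| ≤ ∑ i ∈ S, |x i - m| :=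
    sum_le_sum_of_subset_of_nonneg hTS fun _ _ _ => abs_nonneg _
  have hcard : (S.card : ℝ) * |m - y| ≤ k * (T.card * |m - y|) := by
    rw [← mul_assoc]
    exact mul_le_mul_of_nonneg_right (by exact_mod_cast hk) (abs_nonneg _)
  nlinarith [sum_abs_sub_le_add_card_mul S x hq, card_mul_abs_sub_le T x m y]

end NearMedian

section SocialCost

variable (x : ℕ → ℝ) {N1 N2 N : Finset ℕ} (a b : ℝ)

lemma sum_union_ite_mem_left (f : ℕ → ℝ) :
    ∑ i ∈ N1 ∪ N2, (if i ∈ N1 then f i else 0) = ∑ i ∈ N1, f i := by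
  rw [sum_ite_mem, union_inter_cancel_left]

lemma sum_union_ite_mem_right (f : ℕ → ℝ) :
    ∑ i ∈ N1 ∪ N2, (if i ∈ N2 then f i else 0) = ∑ i ∈ N2, f i := by
  rw [sum_ite_mem, union_inter_cancel_right]

lemma SC_le_sum_add_sum (hU : N1 ∪ N2 = N) :
    SC x N1 N2 N (a, b) ≤ ∑ i ∈ N1, |x i - a| + ∑ i ∈ N2, |x i - b| := by
  subst hU
  rw [SC, ← sum_union_ite_mem_left (N2 := N2) fun i => |x i - a|,
    ← sum_union_ite_mem_right (N1 := N1) fun i => |x i - b|, ← sum_add_distrib]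
  refine sum_le_sum fun i hi => ?_
  unfold cost
  split_ifs <;> simp_all

lemma sum_le_SC_left (hU : N1 ∪ N2 = N) :
    ∑ i ∈ N1, |x i - a| ≤ SC x N1 N2 N (a, b) := by
  subst hU
  rw [SC, ← sum_union_ite_mem_left (N2 := N2)]
  refine sum_le_sum fun i hi => ?_
  unfold cost
  split_ifs <;> simp_all

lemma sum_le_SC_right (hU : N1 ∪ N2 = N) :
    ∑ i ∈ N2, |x i - b| ≤ SC x N1 N2 N (a, b) := by
  subst hU
  rw [SC, ← sum_union_ite_mem_right (N1 := N1)]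
  refine sum_le_sum fun i hi => ?_
  unfold cost
  split_ifs <;> simp_all

end SocialCost

theorem case_one_two_one_seven_approx_general
    (N N1 N2 : Finset ℕ) (x : ℕ → ℝ) (C : Finset ℝ)
    (hU : N1 ∪ N2 = N)
    (hcase2 : (N2 \ N1).card ≤ (N1 ∩ N2).card)
    (heq : tloc C (medianPos N2 x) = tloc C (medianPos (N1 \ N2) x))
    (y1 y2 : ℝ) (hy1 : y1 ∈ C) (hy : y1 ≠ y2)
    (hy2eq : y2 = tloc C (medianPos (N1 \ N2) x)) :
    SC x N1 N2 N (tloc C (medianPos (N1 \ N2) x), sloc C (medianPos N2 x)) ≤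
      7 * SC x N1 N2 N (y1, y2) := by
  set t := tloc C (medianPos (N1 \ N2) x)
  subst hy2eq
  have hcardN2 : N2.card ≤ 2 * (N1 ∩ N2).card := by
    have := card_sdiff_add_card_inter N2 N1
    rw [inter_comm] at this
    omega
  have hsumN1only := sum_abs_sub_le_of_near_medianPos (N1 \ N2) x subset_rfl (k := 1) (by simp)
    (abs_sub_tloc_le hy1) y1
  have hsumN2 := sum_abs_sub_le_of_near_medianPos N2 x inter_subset_right hcardN2
    (abs_sub_sloc_le hy1 (heq ▸ hy)) t
  have hIt : ∑ i ∈ N1 ∩ N2, |x i - t| ≤ ∑ i ∈ N2, |x i - t| :=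
    sum_le_sum_of_subset_of_nonneg inter_subset_right fun _ _ _ => abs_nonneg _
  have hIy : 0 ≤ ∑ i ∈ N1 ∩ N2, |x i - y1| := sum_nonneg fun _ _ => abs_nonneg _
  have hsplit_t := sum_inter_add_sum_sdiff N1 N2 fun i => |x i - t|
  have hsplit_y := sum_inter_add_sum_sdiff N1 N2 fun i => |x i - y1|
  push_cast at hsumN1only hsumN2
  calc SC x N1 N2 N (t, sloc C (medianPos N2 x))
      ≤ ∑ i ∈ N1, |x i - t| + ∑ i ∈ N2, |x i - sloc C (medianPos N2 x)| :=
        SC_le_sum_add_sum x _ _ hU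
    _ ≤ 3 * ∑ i ∈ N1, |x i - y1| + 4 * ∑ i ∈ N2, |x i - t| := by linarith
    _ ≤ 3 * SC x N1 N2 N (y1, t) + 4 * SC x N1 N2 N (y1, t) := by
        gcongr
        exacts [sum_le_SC_left x _ _ hU, sum_le_SC_right x _ _ hU]
    _ = 7 * SC x N1 N2 N (y1, t) := by ring

/-- Case 1.2.1 of the social-cost analysis: when `|N₁| ≥ |N₂|`, `|N₁ \ N₂| ≥ |N₁ ∩ N₂|`,
`|N₂ \ N₁| ≤ |N₁ ∩ N₂|`, and `t(m₂) = t(m₁)`, the mechanism output `(t(m₁), s(m₂))` is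
7-approximate against any feasible solution whose second facility is at `t(m₁)`. -/
theorem case_one_two_one_seven_approx
    (N N1 N2 : Finset ℕ) (x : ℕ → ℝ) (C : Finset ℝ)
    (hN : N.Nonempty) (h1 : N1.Nonempty) (h2 : N2.Nonempty)
    (hU : N1 ∪ N2 = N) (hC : 2 ≤ C.card)
    (hcards : N2.card ≤ N1.card)
    (hcase : (N1 ∩ N2).card ≤ (N1 \ N2).card)
    (hcase2 : (N2 \ N1).card ≤ (N1 ∩ N2).card)
    (heq : tloc C (medianPos N2 x) = tloc C (medianPos (N1 \ N2) x))
    (y1 y2 : ℝ) (hy1 : y1 ∈ C) (hy2 : y2 ∈ C) (hy : y1 ≠ y2)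
    (hy2eq : y2 = tloc C (medianPos (N1 \ N2) x)) :
    SC x N1 N2 N (tloc C (medianPos (N1 \ N2) x), sloc C (medianPos N2 x)) ≤
      7 * SC x N1 N2 N (y1, y2) :=
  case_one_two_one_seven_approx_general N N1 N2 x C hU hcase2 heq y1 y2 hy1 hy hy2eq
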